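/- Morelli coincidence in dimension 2 via characteristic functions: if K = Cone(v₁,v₂) is a two-dimensional cone in ℝ² and K∨ = Cone(w₁,w₂) (identified with a cone in ℝ² via the standard inner product) with v₁ ⊥ w₁ and v₂ ⊥ w₂, and L₁ = Cone(v₁,w₁), L₂ = Cone(v₂,w₂), then the characteristic functions satisfy χ_K + χ_{K∨} = χ_{L₁} + χ_{L₂} pointwise (as functions on ℝ², away from a measure-zero set of boundaries, or as an identity of indicator functions of the four closed cones that holds away from the boundary rays). -/

import Mathlib

/-!
Every one of the four cones is cut out by the sign conditions of two of the linear forms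
`⟨w₁, ·⟩, ⟨w₂, ·⟩, ⟨v₁, ·⟩, ⟨v₂, ·⟩`: `K` by the `wᵢ`, `K∨` by the `vᵢ`, and `Lᵢ` by `vᵢ` and `wᵢ`.
Writing `S₁, S₂, U, R` for the indicators of `⟨w₁, x⟩ ≥ 0`, `⟨w₂, x⟩ ≥ 0`, `⟨v₁, x⟩ ≥ 0`,
`⟨v₂, x⟩ ≥ 0`, the identity reads `S₁S₂ + UR = US₁ + RS₂`, i.e. `(S₁ - R)(S₂ - U) = 0`.
For `x = a v₁ + b v₂` the forms `⟨w₁, x⟩` and `⟨w₂, x⟩` have the signs of `b` and `a`, while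
`a ⟨v₁, x⟩ + b ⟨v₂, x⟩ = ‖x‖² > 0` prevents both sign pairs from disagreeing.
-/

/-- The cone spanned by two vectors in `ℝ²`. -/
def cone2 (v w : ℝ × ℝ) : Set (ℝ × ℝ) := {x | ∃ a b : ℝ, 0 ≤ a ∧ 0 ≤ b ∧ x = a • v + b • w}

/-- The ray spanned by a vector in `ℝ²`. -/
def ray2 (v : ℝ × ℝ) : Set (ℝ × ℝ) := {x | ∃ a : ℝ, 0 ≤ a ∧ x = a • v}

/-- The standard dot product on `ℝ²`. -/
def dot2 (x y : ℝ × ℝ) : ℝ := x.1 * y.1 + x.2 * y.2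

def dualCone2 (S : Set (ℝ × ℝ)) : Set (ℝ × ℝ) := {w | ∀ v ∈ S, 0 ≤ dot2 w v}

lemma dot2_comm (x y : ℝ × ℝ) : dot2 x y = dot2 y x := by
  simp only [dot2]; ring

lemma dot2_smul_add_smul_right (p e f : ℝ × ℝ) (a b : ℝ) :
    dot2 p (a • e + b • f) = a * dot2 p e + b * dot2 p f := by
  simp only [dot2, Prod.fst_add, Prod.snd_add, Prod.smul_fst, Prod.smul_snd, smul_eq_mul]; ring

lemma dot2_smul_add_smul_left (e f v : ℝ × ℝ) (a b : ℝ) :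
    dot2 (a • e + b • f) v = a * dot2 e v + b * dot2 f v := by
  rw [dot2_comm, dot2_smul_add_smul_right, dot2_comm e, dot2_comm f]

lemma dot2_zero_right (p : ℝ × ℝ) : dot2 p 0 = 0 := by
  simp [dot2]

lemma dot2_self_pos {v : ℝ × ℝ} (hv : v ≠ 0) : 0 < dot2 v v := by
  refine lt_of_le_of_ne (add_nonneg (mul_self_nonneg _) (mul_self_nonneg _)) fun h => hv ?_
  obtain ⟨h₁, h₂⟩ := mul_self_add_mul_self_eq_zero.1 h.symm
  exact Prod.ext h₁ h₂

lemma cone2_comm (v w : ℝ × ℝ) : cone2 v w = cone2 w v := by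
  ext x
  constructor <;> rintro ⟨a, b, ha, hb, rfl⟩ <;> exact ⟨b, a, hb, ha, add_comm _ _⟩

lemma left_mem_cone2 (v w : ℝ × ℝ) : v ∈ cone2 v w :=
  ⟨1, 0, zero_le_one, le_rfl, by simp⟩

lemma exists_eq_smul_add_smul {e f : ℝ × ℝ} (h : LinearIndependent ℝ ![e, f]) (x : ℝ × ℝ) :
    ∃ a b : ℝ, x = a • e + b • f := by
  have hspan : Submodule.span ℝ {e, f} = ⊤ := by
    rw [← Matrix.range_cons_cons_empty e f ![]]
    exact h.span_eq_top_of_card_eq_finrank (by simp)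
  obtain ⟨a, b, hab⟩ := Submodule.mem_span_pair.1 (hspan ▸ Submodule.mem_top (x := x))
  exact ⟨a, b, hab.symm⟩

lemma dot2_smul_add_smul_of_dot2_eq_zero {p e f : ℝ × ℝ} (hpf : dot2 p f = 0) (a b : ℝ) :
    dot2 p (a • e + b • f) = a * dot2 p e := by
  rw [dot2_smul_add_smul_right, hpf, mul_zero, add_zero]

lemma mem_cone2_iff {e f p q : ℝ × ℝ} (hpe : 0 < dot2 p e) (hpf : dot2 p f = 0)
    (hqe : dot2 q e = 0) (hqf : 0 < dot2 q f) (x : ℝ × ℝ) :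
    x ∈ cone2 e f ↔ 0 ≤ dot2 p x ∧ 0 ≤ dot2 q x := by
  have hp (a b : ℝ) := dot2_smul_add_smul_of_dot2_eq_zero (e := e) hpf a b
  have hq (a b : ℝ) : dot2 q (a • e + b • f) = b * dot2 q f := by
    rw [add_comm]; exact dot2_smul_add_smul_of_dot2_eq_zero hqe b a
  constructor
  · rintro ⟨a, b, ha, hb, rfl⟩
    rw [hp, hq]
    exact ⟨mul_nonneg ha hpe.le, mul_nonneg hb hqf.le⟩
  · have hind : LinearIndependent ℝ ![e, f] := by
      refine LinearIndependent.pair_iff.2 fun a b h => ?_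
      have ha := hp a b
      have hb := hq a b
      rw [h, dot2_zero_right] at ha hb
      exact ⟨(mul_eq_zero.1 ha.symm).resolve_right hpe.ne',
        (mul_eq_zero.1 hb.symm).resolve_right hqf.ne'⟩
    obtain ⟨a, b, rfl⟩ := exists_eq_smul_add_smul hind x
    rw [hp, hq, mul_nonneg_iff_of_pos_right hpe, mul_nonneg_iff_of_pos_right hqf]
    rintro ⟨ha, hb⟩
    exact ⟨a, b, ha, hb, rfl⟩

lemma mem_dualCone2_cone2 {v₁ v₂ y : ℝ × ℝ} :
    y ∈ dualCone2 (cone2 v₁ v₂) ↔ 0 ≤ dot2 y v₁ ∧ 0 ≤ dot2 y v₂ := by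
  refine ⟨fun h => ⟨h _ (left_mem_cone2 v₁ v₂), h _ (cone2_comm v₁ v₂ ▸ left_mem_cone2 v₂ v₁)⟩, ?_⟩
  rintro ⟨h₁, h₂⟩ _ ⟨a, b, ha, hb, rfl⟩
  rw [dot2_smul_add_smul_right]
  exact add_nonneg (mul_nonneg ha h₁) (mul_nonneg hb h₂)

lemma eq_zero_of_dot2_eq_zero {v₁ v₂ p : ℝ × ℝ} (hind : LinearIndependent ℝ ![v₁, v₂])
    (h₁ : dot2 p v₁ = 0) (h₂ : dot2 p v₂ = 0) : p = 0 := by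
  obtain ⟨a, b, hab⟩ := exists_eq_smul_add_smul hind p
  by_contra hp
  have hpp := dot2_self_pos hp
  rw [hab, dot2_smul_add_smul_left, dot2_comm v₁, dot2_comm v₂, ← hab, h₁, h₂] at hpp
  simp at hpp

lemma exists_dot2_eq_zero_and_pos {v₁ v₂ : ℝ × ℝ} (hind : LinearIndependent ℝ ![v₁, v₂]) :
    ∃ p, dot2 p v₁ = 0 ∧ 0 < dot2 p v₂ := by
  set p₀ : ℝ × ℝ := (-v₁.2, v₁.1)
  have hp₀v₁ : dot2 p₀ v₁ = 0 := by simp only [dot2, p₀]; ring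
  have hp₀ : p₀ ≠ 0 := fun h => hind.ne_zero 0 <| by
    simp only [p₀, Prod.ext_iff, Prod.fst_zero, Prod.snd_zero, neg_eq_zero] at h
    exact Prod.ext h.2 h.1
  have hc : dot2 p₀ v₂ ≠ 0 := fun h => hp₀ (eq_zero_of_dot2_eq_zero hind hp₀v₁ h)
  have hsmul (v : ℝ × ℝ) : dot2 (dot2 p₀ v₂ • p₀) v = dot2 p₀ v₂ * dot2 p₀ v := by
    simp only [dot2, Prod.smul_fst, Prod.smul_snd, smul_eq_mul]; ring
  exact ⟨dot2 p₀ v₂ • p₀, by rw [hsmul, hp₀v₁, mul_zero], by rw [hsmul]; exact mul_self_pos.2 hc⟩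

lemma dot2_pos_of_cone2_eq_dualCone2 {v₁ v₂ w₁ w₂ : ℝ × ℝ}
    (hind : LinearIndependent ℝ ![v₁, v₂]) (hdual : cone2 w₁ w₂ = dualCone2 (cone2 v₁ v₂))
    (h₂ : dot2 w₂ v₂ = 0) : 0 < dot2 w₁ v₂ := by
  obtain ⟨p, hp₁, hp₂⟩ := exists_dot2_eq_zero_and_pos hind
  have hp : p ∈ cone2 w₁ w₂ := hdual ▸ mem_dualCone2_cone2.2 ⟨hp₁.ge, hp₂.le⟩
  obtain ⟨α, β, hα, -, rfl⟩ := hp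
  rw [dot2_smul_add_smul_left, h₂, mul_zero, add_zero] at hp₂
  exact pos_of_mul_pos_right hp₂ hα

lemma iff_or_iff_of_mul_add_mul_pos {a b u r : ℝ} (h : 0 < a * u + b * r) :
    (0 ≤ b ↔ 0 ≤ r) ∨ (0 ≤ a ↔ 0 ≤ u) := by
  by_contra! ⟨hbr, hau⟩
  have hbr' : b * r ≤ 0 :=
    mul_nonpos_iff.2 (hbr.imp (And.imp_right le_of_lt) (And.imp_left le_of_lt))
  have hau' : a * u ≤ 0 :=
    mul_nonpos_iff.2 (hau.imp (And.imp_right le_of_lt) (And.imp_left le_of_lt))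
  linarith

lemma ite_and_add_ite_and {M : Type*} [AddCommMonoid M] (c : M) {p q r s : Prop}
    [Decidable p] [Decidable q] [Decidable r] [Decidable s] (h : (q ↔ r) ∨ (p ↔ s)) :
    ((if p ∧ q then c else 0) + if r ∧ s then c else 0) =
      (if s ∧ q then c else 0) + if r ∧ p then c else 0 := by
  rcases h with h | h <;> simp only [h, and_comm, add_comm]

lemma dot2_sign_agree {v₁ v₂ w₁ w₂ : ℝ × ℝ} (hind : LinearIndependent ℝ ![v₁, v₂])
    (h₁ : dot2 w₁ v₁ = 0) (h₂ : dot2 w₂ v₂ = 0) (c₁ : 0 < dot2 w₁ v₂) (c₂ : 0 < dot2 w₂ v₁)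
    (x : ℝ × ℝ) : (0 ≤ dot2 w₁ x ↔ 0 ≤ dot2 v₂ x) ∨ (0 ≤ dot2 w₂ x ↔ 0 ≤ dot2 v₁ x) := by
  rcases eq_or_ne x 0 with rfl | hx
  · simp only [dot2_zero_right, true_or]
  obtain ⟨a, b, hab⟩ := exists_eq_smul_add_smul hind x
  have hw₁ : dot2 w₁ x = b * dot2 w₁ v₂ := by
    rw [hab, add_comm]; exact dot2_smul_add_smul_of_dot2_eq_zero h₁ b a
  have hw₂ : dot2 w₂ x = a * dot2 w₂ v₁ := by
    rw [hab]; exact dot2_smul_add_smul_of_dot2_eq_zero h₂ a b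
  have hxx : dot2 x x = a * dot2 v₁ x + b * dot2 v₂ x := by
    nth_rewrite 2 [hab]
    rw [dot2_smul_add_smul_right, dot2_comm x v₁, dot2_comm x v₂]
  rw [hw₁, hw₂, mul_nonneg_iff_of_pos_right c₁, mul_nonneg_iff_of_pos_right c₂]
  exact iff_or_iff_of_mul_add_mul_pos (hxx ▸ dot2_self_pos hx)

/-- Morelli's coincidence in dimension 2, via characteristic functions:
`χ_K + χ_{K∨} = χ_{L₁} + χ_{L₂}` away from the four boundary rays. -/
theorem morelli_char_fun_identity (v₁ v₂ w₁ w₂ : ℝ × ℝ)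
    (hind : LinearIndependent ℝ ![v₁, v₂])
    (hdual : cone2 w₁ w₂ = {w | ∀ v ∈ cone2 v₁ v₂, 0 ≤ dot2 w v})
    (h₁ : dot2 w₁ v₁ = 0) (h₂ : dot2 w₂ v₂ = 0) :
    ∀ x ∉ ray2 v₁ ∪ ray2 v₂ ∪ ray2 w₁ ∪ ray2 w₂,
      (cone2 v₁ v₂).indicator (1 : (ℝ × ℝ) → ℝ) x +
        (cone2 w₁ w₂).indicator 1 x =
      (cone2 v₁ w₁).indicator 1 x + (cone2 v₂ w₂).indicator 1 x := by
  intro x _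
  have c₁ : 0 < dot2 w₁ v₂ := dot2_pos_of_cone2_eq_dualCone2 hind hdual h₂
  have c₂ : 0 < dot2 w₂ v₁ :=
    dot2_pos_of_cone2_eq_dualCone2 (LinearIndependent.pair_symm_iff.1 hind)
      (by rwa [cone2_comm, cone2_comm v₂]) h₁
  have hv₁ : 0 < dot2 v₁ v₁ := dot2_self_pos (hind.ne_zero 0)
  have hv₂ : 0 < dot2 v₂ v₂ := dot2_self_pos (hind.ne_zero 1)
  have hw₁ : 0 < dot2 w₁ w₁ := dot2_self_pos fun h => by simp [h, dot2] at c₁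
  have hw₂ : 0 < dot2 w₂ w₂ := dot2_self_pos fun h => by simp [h, dot2] at c₂
  have h₁' : dot2 v₁ w₁ = 0 := by rwa [dot2_comm]
  have h₂' : dot2 v₂ w₂ = 0 := by rwa [dot2_comm]
  have c₁' : 0 < dot2 v₂ w₁ := by rwa [dot2_comm]
  have c₂' : 0 < dot2 v₁ w₂ := by rwa [dot2_comm]
  classical
  simp only [Set.indicator_apply, Pi.one_apply, mem_cone2_iff c₂ h₂ h₁ c₁,
    mem_cone2_iff c₁' h₂' h₁' c₂', mem_cone2_iff hv₁ h₁' h₁ hw₁, mem_cone2_iff hv₂ h₂' h₂ hw₂]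
  exact ite_and_add_ite_and 1 (dot2_sign_agree hind h₁ h₂ c₁ c₂ x)
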